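/- arXiv:1208.5913 — 3 statements merged into one kernel-verified Lean document; each statement's English description precedes it below -/
import Mathlib

section
/- In the logic LDiiP, the internalised disjunction property holds in both directions: ⊢ (M ⊩_a (φ ∨ φ')) ↔ ((M ⊩_a φ) ∨ (M ⊩_a φ')). -/
/-- Formulas of LDiiP over agents and messages. -/
inductive Fm (Agent Msg : Type) : Type where
  | atom : Nat → Fm Agent Msg
  | knows : Agent → Msg → Fm Agent Msg
  | bot : Fm Agent Msg
  | imp : Fm Agent Msg → Fm Agent Msg → Fm Agent Msg
  | and : Fm Agent Msg → Fm Agent Msg → Fm Agent Msg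
  | or : Fm Agent Msg → Fm Agent Msg → Fm Agent Msg
  | neg : Fm Agent Msg → Fm Agent Msg
  | proves : Msg → Agent → Fm Agent Msg → Fm Agent Msg

def Fm.iff {Agent Msg : Type} (p q : Fm Agent Msg) : Fm Agent Msg :=
  (p.imp q).and (q.imp p)

/-- Classical evaluation of a formula, treating atoms, knowledge atoms and
modal formulas as opaque propositions assigned by `v`. -/
def Fm.eval {Agent Msg : Type} (v : Fm Agent Msg → Prop) : Fm Agent Msg → Prop
  | .bot => False
  | .imp p q => Fm.eval v p → Fm.eval v q
  | .and p q => Fm.eval v p ∧ Fm.eval v q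
  | .or p q => Fm.eval v p ∨ Fm.eval v q
  | .neg p => ¬ Fm.eval v p
  | φ => v φ

/-- A classical (propositional) tautology schema. -/
def Fm.Taut {Agent Msg : Type} (φ : Fm Agent Msg) : Prop :=
  ∀ v, φ.eval v

/-- The logic LDiiP: a normal modal logic with proof modality `proves M a φ`
(`M ⊩_a φ`), containing all classical tautologies, with axioms of
self-knowledge, Kripke's law, epistemic truthfulness, proof consistency and
negation completeness, closed under modus ponens and necessitation. -/
structure LDiiP (Agent Msg : Type) where
  Thm : Fm Agent Msg → Prop
  taut : ∀ {φ : Fm Agent Msg}, φ.Taut → Thm φ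
  mp : ∀ {φ ψ : Fm Agent Msg}, Thm (φ.imp ψ) → Thm φ → Thm ψ
  nec : ∀ (M : Msg) (a : Agent) {φ : Fm Agent Msg}, Thm φ → Thm (.proves M a φ)
  selfKnow : ∀ (M : Msg) (a : Agent), Thm (.proves M a (.knows a M))
  kripke : ∀ (M : Msg) (a : Agent) (φ ψ : Fm Agent Msg),
    Thm ((Fm.proves M a (φ.imp ψ)).imp ((Fm.proves M a φ).imp (Fm.proves M a ψ)))
  epistemic : ∀ (M : Msg) (a : Agent) (φ : Fm Agent Msg),
    Thm ((Fm.proves M a φ).imp ((Fm.knows a M).imp φ))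
  consistency : ∀ (M : Msg) (a : Agent), Thm (Fm.neg (Fm.proves M a Fm.bot))
  negComplete : ∀ (M : Msg) (a : Agent) (φ : Fm Agent Msg),
    Thm ((Fm.proves M a φ).or (Fm.proves M a (Fm.neg φ)))

/-! Right to left is monotonicity of the normal modality `M ⊩_a`. For left to right,
negation completeness gives `M ⊩_a φ` or `M ⊩_a ¬φ`; in the second case
necessitation yields `M ⊩_a (φ ∨ φ' → φ')`, and Kripke's law
turns `M ⊩_a (φ ∨ φ')` into `M ⊩_a φ'`. -/

namespace LDiiP

variable {Agent Msg : Type} (L : LDiiP Agent Msg)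

theorem mp₂_of_taut {φ ψ χ : Fm Agent Msg} (h : (φ.imp (ψ.imp χ)).Taut)
    (hφ : L.Thm φ) (hψ : L.Thm ψ) : L.Thm χ :=
  L.mp (L.mp (L.taut h) hφ) hψ

theorem imp_trans {φ ψ χ : Fm Agent Msg} (hφψ : L.Thm (φ.imp ψ)) (hψχ : L.Thm (ψ.imp χ)) :
    L.Thm (φ.imp χ) :=
  L.mp₂_of_taut (fun v => by simp only [Fm.eval]; tauto) hφψ hψχ

theorem iff_intro {φ ψ : Fm Agent Msg} (hφψ : L.Thm (φ.imp ψ)) (hψφ : L.Thm (ψ.imp φ)) :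
    L.Thm (φ.iff ψ) :=
  L.mp₂_of_taut (fun v => by simp only [Fm.iff, Fm.eval]; tauto) hφψ hψφ

theorem proves_mono (M : Msg) (a : Agent) {φ ψ : Fm Agent Msg} (h : L.Thm (φ.imp ψ)) :
    L.Thm ((Fm.proves M a φ).imp (Fm.proves M a ψ)) :=
  L.mp (L.kripke M a φ ψ) (L.nec M a h)

theorem proves_or_of_or_proves (M : Msg) (a : Agent) (φ φ' : Fm Agent Msg) :
    L.Thm (((Fm.proves M a φ).or (Fm.proves M a φ')).imp (Fm.proves M a (φ.or φ'))) :=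
  L.mp₂_of_taut (fun v => by simp only [Fm.eval]; tauto)
    (L.proves_mono M a (ψ := φ.or φ') (L.taut fun v => by simp only [Fm.eval]; tauto))
    (L.proves_mono M a (ψ := φ.or φ') (L.taut fun v => by simp only [Fm.eval]; tauto))

theorem or_proves_of_proves_or (M : Msg) (a : Agent) (φ φ' : Fm Agent Msg) :
    L.Thm ((Fm.proves M a (φ.or φ')).imp ((Fm.proves M a φ).or (Fm.proves M a φ'))) := by
  have hneg : L.Thm ((Fm.proves M a φ.neg).imp
      ((Fm.proves M a (φ.or φ')).imp (Fm.proves M a φ'))) :=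
    L.imp_trans (L.proves_mono M a (L.taut fun v => by simp only [Fm.eval]; tauto))
      (L.kripke M a (φ.or φ') φ')
  exact L.mp₂_of_taut (fun v => by simp only [Fm.eval]; tauto) (L.negComplete M a φ) hneg

end LDiiP

/-- Internalised disjunction property bis:
⊢ (M ⊩_a (φ ∨ φ')) ↔ ((M ⊩_a φ) ∨ (M ⊩_a φ')). -/
theorem ldiip_disj_distrib {Agent Msg : Type} (L : LDiiP Agent Msg)
    (M : Msg) (a : Agent) (φ φ' : Fm Agent Msg) :
    L.Thm (Fm.iff (Fm.proves M a (φ.or φ'))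
      ((Fm.proves M a φ).or (Fm.proves M a φ'))) :=
  L.iff_intro (L.or_proves_of_proves_or M a φ φ') (L.proves_or_of_or_proves M a φ φ')
end

section
/- In the logic LDiiP, the proof modality distributes over implication in both directions: ⊢ (M ⊩_a (φ → φ')) ↔ ((M ⊩_a φ) → (M ⊩_a φ')). -/
namespace LDiiP

variable {Agent Msg : Type} (L : LDiiP Agent Msg)

theorem thm_of_taut_imp {p q : Fm Agent Msg} (h : (p.imp q).Taut) (hp : L.Thm p) : L.Thm q :=
  L.mp (L.taut h) hp

theorem thm_of_taut_imp₂ {p q r : Fm Agent Msg} (h : (p.imp (q.imp r)).Taut)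
    (hp : L.Thm p) (hq : L.Thm q) : L.Thm r :=
  L.mp (L.thm_of_taut_imp h hp) hq

theorem proves_imp_proves_of_taut (M : Msg) (a : Agent) {φ ψ : Fm Agent Msg}
    (h : (φ.imp ψ).Taut) : L.Thm ((Fm.proves M a φ).imp (Fm.proves M a ψ)) :=
  L.mp (L.kripke M a φ ψ) (L.nec M a (L.taut h))

/-- Negation completeness gives `M ⊩_a φ` or `M ⊩_a ¬φ`; in the first case `M ⊩_a φ'` holds by
assumption, and both `φ'` and `¬φ` imply `φ → φ'`. -/
theorem imp_proves_imp_proves_imp (M : Msg) (a : Agent) (φ φ' : Fm Agent Msg) :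
    L.Thm (((Fm.proves M a φ).imp (Fm.proves M a φ')).imp (Fm.proves M a (φ.imp φ'))) := by
  have of_proves_right : L.Thm ((Fm.proves M a φ').imp (Fm.proves M a (φ.imp φ'))) :=
    L.proves_imp_proves_of_taut M a fun v => by dsimp only [Fm.eval]; tauto
  have of_proves_neg : L.Thm ((Fm.proves M a φ.neg).imp (Fm.proves M a (φ.imp φ'))) :=
    L.proves_imp_proves_of_taut M a fun v => by dsimp only [Fm.eval]; tauto
  refine L.mp (L.thm_of_taut_imp₂ (fun v => ?_) of_proves_right of_proves_neg)
    (L.negComplete M a φ)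
  dsimp only [Fm.eval]
  tauto

end LDiiP

/-- K bis: ⊢ (M ⊩_a (φ → φ')) ↔ ((M ⊩_a φ) → (M ⊩_a φ')). -/
theorem ldiip_imp_distrib {Agent Msg : Type} (L : LDiiP Agent Msg)
    (M : Msg) (a : Agent) (φ φ' : Fm Agent Msg) :
    L.Thm (Fm.iff (Fm.proves M a (φ.imp φ'))
      ((Fm.proves M a φ).imp (Fm.proves M a φ'))) :=
  L.thm_of_taut_imp₂ (fun v => by dsimp only [Fm.iff, Fm.eval]; tauto)
    (L.kripke M a φ φ') (L.imp_proves_imp_proves_imp M a φ φ')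
end

section
/- In the logic LDiiP, modal idempotency bis holds: ⊢ k_b(M) → ((M ⊩_b (M ⊩_a φ)) ↔ (M ⊩_a φ)), for any two agents a and b. -/
namespace LDiiP

variable {Agent Msg : Type} (L : LDiiP Agent Msg)

theorem mp_taut {φ ψ : Fm Agent Msg} (h : (φ.imp ψ).Taut) (hφ : L.Thm φ) : L.Thm ψ :=
  L.mp (L.taut h) hφ

theorem thm_and {φ ψ : Fm Agent Msg} (hφ : L.Thm φ) (hψ : L.Thm ψ) : L.Thm (φ.and ψ) :=
  L.mp (L.mp_taut (ψ := ψ.imp (φ.and ψ)) (fun _ hφ hψ => ⟨hφ, hψ⟩) hφ) hψ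

/-- Truthfulness gives `→`; for `←`, negation completeness leaves `M ⊩_b ¬ψ` as the only
alternative, and truthfulness turns it into `¬ψ`. -/
theorem knows_imp_proves_iff (M : Msg) (b : Agent) (ψ : Fm Agent Msg) :
    L.Thm ((Fm.knows b M).imp (Fm.iff (Fm.proves M b ψ) ψ)) := by
  refine L.mp_taut ?_ <| L.thm_and
    (L.thm_and (L.epistemic M b ψ) (L.epistemic M b ψ.neg)) (L.negComplete M b ψ)
  intro v
  simp only [Fm.eval, Fm.iff]
  tauto

end LDiiP

/-- Modal idempotency bis: ⊢ k_b(M) → ((M ⊩_b (M ⊩_a φ)) ↔ (M ⊩_a φ)). -/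
theorem ldiip_modal_idempotency_bis {Agent Msg : Type} (L : LDiiP Agent Msg)
    (M : Msg) (a b : Agent) (φ : Fm Agent Msg) :
    L.Thm ((Fm.knows b M).imp
      (Fm.iff (Fm.proves M b (Fm.proves M a φ)) (Fm.proves M a φ))) :=
  L.knows_imp_proves_iff M b (Fm.proves M a φ)
end
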